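/- For every n ≥ 1, the assignment x_j ↦ π_j (for 1 ≤ j ≤ n) extends to a monoid isomorphism from the Hecke–Kiselman monoid HK(Q_n) of the linearly oriented type-A quiver Q_n onto the monoid NDPF_{n+1} of non-decreasing parking functions. -/

import Mathlib

set_option linter.unreachableTactic false
set_option linter.unusedTactic false

/-- The defining relations of the Hecke–Kiselman monoid of a quiver with
vertex type `V` and arrow relation `arr`. -/
inductive HKRel {V : Type} (arr : V → V → Prop) : FreeMonoid V → FreeMonoid V → Prop
  | idem (t : V) :
      HKRel arr (FreeMonoid.of t * FreeMonoid.of t) (FreeMonoid.of t)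
  | braid (s t : V) :
      HKRel arr (FreeMonoid.of s * FreeMonoid.of t * FreeMonoid.of s)
        (FreeMonoid.of t * FreeMonoid.of s * FreeMonoid.of t)
  | absorb (s t : V) : ¬ arr t s →
      HKRel arr (FreeMonoid.of t * FreeMonoid.of s * FreeMonoid.of t)
        (FreeMonoid.of s * FreeMonoid.of t)

/-- The congruence on the free monoid generated by the Hecke–Kiselman relations. -/
def HKCon {V : Type} (arr : V → V → Prop) : Con (FreeMonoid V) := conGen (HKRel arr)

/-- The Hecke–Kiselman monoid of the quiver `(V, arr)`. -/
abbrev HK {V : Type} (arr : V → V → Prop) : Type := (HKCon arr).Quotient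

/-- The generator of the Hecke–Kiselman monoid attached to the vertex `t`. -/
def HK.x {V : Type} (arr : V → V → Prop) (t : V) : HK arr :=
  (HKCon arr).mk' (FreeMonoid.of t)

/-- The quiver `(V, arr)` is acyclic: the transitive closure of `arr` is irreflexive. -/
def IsAcyclicQuiver {V : Type} (arr : V → V → Prop) : Prop :=
  ∀ v : V, ¬ Relation.TransGen arr v v

/-- The arrow relation of the linearly oriented type-`A` quiver `Q_n` with vertices
`1, …, n` (modelled as `Fin n`) and arrows `i → i+1`. -/
def arrQn (n : ℕ) : Fin n → Fin n → Prop := fun i j => (i : ℕ) + 1 = (j : ℕ)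

/-- The monoid of non-decreasing parking functions on `{1, …, n}` (modelled as `Fin n`):
order-preserving functions `f` with `f i ≤ i`, under composition. -/
def NDPF (n : ℕ) : Type :=
  {f : Fin n → Fin n // Monotone f ∧ ∀ i, f i ≤ i}

instance (n : ℕ) : Monoid (NDPF n) where
  mul f g := ⟨f.1 ∘ g.1, (f.2.1.comp g.2.1 : _), fun i => (f.2.2 _).trans (g.2.2 i)⟩
  one := ⟨id, monotone_id, fun _ => le_rfl⟩
  mul_assoc _ _ _ := rfl
  one_mul _ := rfl
  mul_one _ := rfl

/-- The generator `π_j` of `NDPF (n+1)`: it sends the point `j+1` to `j` and fixes all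
other points (here `j : Fin n` represents the paper's `j+1 ∈ {1,…,n}`, and `Fin (n+1)`
represents `{1,…,n+1}` via `i ↦ i+1`). -/
def ndpfPi {n : ℕ} (j : Fin n) : NDPF (n + 1) :=
  ⟨fun i => if (i : ℕ) = (j : ℕ) + 1 then ⟨(j : ℕ), by omega⟩ else i, by
    intro a b hab
    have hab' : (a : ℕ) ≤ (b : ℕ) := hab
    by_cases ha : (a : ℕ) = (j : ℕ) + 1 <;> by_cases hb : (b : ℕ) = (j : ℕ) + 1 <;>
      simp only [ha, hb, if_pos, if_neg, Fin.le_def] <;> simp <;> omega, by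
    intro i
    by_cases hi : (i : ℕ) = (j : ℕ) + 1 <;>
      simp only [hi, if_pos, if_neg, Fin.le_def] <;> simp <;> omega⟩

/-!
Acting on `ℕ` (and fixing the points beyond `n`), `π_j` is the collapse of `(j, j + 1]` onto `j`.
These collapses satisfy the Hecke–Kiselman relations, so `x_j ↦ π_j` is a homomorphism, and the
segment `x_v x_{v+1} ⋯ x_{b-1}` maps to the collapse of `(v, b]` onto `v`. The homomorphism is onto
because every `f ∈ NDPF_{n+1}` is the composite `c_n ∘ ⋯ ∘ c_1 ∘ c_0` of the collapses `c_m` of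
`(f m, m]` onto `f m`.

It is injective because, by the relations, a generator can be multiplied into a product of segments
over a staircase of pairs `(v, b)`, both coordinates strictly decreasing, so every element of
`HK(Q_n)` is such a product; and the staircase is read off from the composite of its collapses:
the first `b` is the largest point moved, the first `v` its image, and the composite of the remaining
collapses is then determined.
-/

section LinearFamily

variable {M : Type*} [Monoid M]

/-- The Hecke–Kiselman relations of the infinite linear quiver `0 → 1 → 2 → ⋯`. -/
structure IsLinearHKFamily (x : ℕ → M) : Prop where
  idem : ∀ a, x a * x a = x a
  braid : ∀ s t, x s * x t * x s = x t * x s * x t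
  absorb : ∀ s t, s ≠ t + 1 → x t * x s * x t = x s * x t

def segmentProd (x : ℕ → M) (v b : ℕ) : M :=
  ((List.range' v (b - v)).map x).prod

section Segment

variable {x : ℕ → M} {v b : ℕ}

theorem segmentProd_of_le (h : b ≤ v) : segmentProd x v b = 1 := by
  simp [segmentProd, Nat.sub_eq_zero_of_le h]

theorem segmentProd_eq_mul (h : v < b) : segmentProd x v b = x v * segmentProd x (v + 1) b := by
  rw [segmentProd, show b - v = b - (v + 1) + 1 by omega, List.range'_succ]
  rfl

theorem segmentProd_succ (h : v ≤ b) : segmentProd x v (b + 1) = segmentProd x v b * x b := by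
  rw [segmentProd, show b + 1 - v = b - v + 1 by omega, List.range'_concat]
  simp [segmentProd, show v + (b - v) = b by omega]

theorem segmentProd_self_succ (a : ℕ) : segmentProd x a (a + 1) = x a := by
  rw [segmentProd_eq_mul (Nat.lt_succ_self a), segmentProd_of_le le_rfl, mul_one]

end Segment

namespace IsLinearHKFamily

variable {x : ℕ → M} (hx : IsLinearHKFamily x)
include hx

theorem commute {s t : ℕ} (h₁ : s ≠ t + 1) (h₂ : t ≠ s + 1) : Commute (x s) (x t) :=
  calc x s * x t = x t * x s * x t := (hx.absorb s t h₁).symm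
    _ = x s * x t * x s := hx.braid t s
    _ = x t * x s := hx.absorb t s h₂

theorem mul_succ_mul_self (c : ℕ) : x c * x (c + 1) * x c = x c * x (c + 1) := by
  rw [hx.braid, hx.absorb c (c + 1) (by omega)]

theorem commute_segmentProd {a v b : ℕ} (h : a + 2 ≤ v) : Commute (x a) (segmentProd x v b) :=
  Commute.list_prod_right _ _ fun y hy => by
    obtain ⟨c, hc, rfl⟩ := List.mem_map.1 hy
    have := (List.mem_range'_1.1 hc).1
    exact hx.commute (by omega) (by omega)

theorem mul_segmentProd_of_mem {v a b : ℕ} (hva : v ≤ a) (hab : a < b) :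
    x a * segmentProd x v b = segmentProd x v b := by
  rw [segmentProd_eq_mul (hva.trans_lt hab)]
  obtain rfl | rfl | h := (show a = v ∨ a = v + 1 ∨ v + 2 ≤ a by omega)
  · rw [← mul_assoc, hx.idem]
  · rw [segmentProd_eq_mul hab, ← mul_assoc, ← mul_assoc, hx.absorb v (v + 1) (by omega), mul_assoc]
  · rw [← mul_assoc, (hx.commute (by omega) (by omega) : x a * x v = x v * x a), mul_assoc,
      mul_segmentProd_of_mem (v := v + 1) (by omega) hab]
termination_by a - v

theorem segmentProd_mul_of_mem {v b c : ℕ} (hvc : v ≤ c) (hcb : c < b) :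
    segmentProd x v b * x c = segmentProd x v b := by
  induction b with
  | zero => omega
  | succ b ih =>
    rw [segmentProd_succ (hvc.trans (Nat.lt_succ_iff.1 hcb))]
    obtain rfl | rfl | h := (show c = b ∨ c + 1 = b ∨ c + 2 ≤ b by omega)
    · rw [mul_assoc, hx.idem]
    · rw [segmentProd_succ hvc]
      simp only [mul_assoc]
      rw [← mul_assoc (x c), hx.mul_succ_mul_self]
    · rw [mul_assoc, (hx.commute (by omega) (by omega) : x b * x c = x c * x b), ← mul_assoc,
        ih (by omega)]

theorem segmentProd_mul_segmentProd {v b w c : ℕ} (hvw : v ≤ w) (hcb : c ≤ b) :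
    segmentProd x v b * segmentProd x w c = segmentProd x v b := by
  induction c with
  | zero => rw [segmentProd_of_le (Nat.zero_le w), mul_one]
  | succ c ih =>
    by_cases hwc : w ≤ c
    · rw [segmentProd_succ hwc, ← mul_assoc, ih (by omega), hx.segmentProd_mul_of_mem (by omega) hcb]
    · rw [segmentProd_of_le (x := x) (v := w) (b := c + 1) (by omega), mul_one]

end IsLinearHKFamily

end LinearFamily

section Staircase

def IsStaircase (l : List (ℕ × ℕ)) : Prop :=
  (∀ p ∈ l, p.1 < p.2) ∧ l.Pairwise fun p q => q.1 < p.1 ∧ q.2 < p.2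

theorem isStaircase_nil : IsStaircase [] := ⟨by simp, List.Pairwise.nil⟩

theorem isStaircase_cons {v b : ℕ} {l : List (ℕ × ℕ)} :
    IsStaircase ((v, b) :: l) ↔ v < b ∧ (∀ q ∈ l, q.1 < v ∧ q.2 < b) ∧ IsStaircase l := by
  simp only [IsStaircase, List.mem_cons, forall_eq_or_imp, List.pairwise_cons]
  tauto

def consMerge (a b : ℕ) : List (ℕ × ℕ) → List (ℕ × ℕ)
  | (w, c) :: l => if w = a then (a, b) :: l else (a, b) :: (w, c) :: l
  | [] => [(a, b)]

/-- The staircase of `x a * staircaseProd x l` (`IsLinearHKFamily.mul_staircaseProd`). -/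
def insertGen (a : ℕ) : List (ℕ × ℕ) → List (ℕ × ℕ)
  | [] => [(a, a + 1)]
  | (v, b) :: l =>
    if a + 2 ≤ v then (v, b) :: insertGen a l
    else if v = a + 1 then consMerge a b l
    else if a < b then (v, b) :: l
    else (a, a + 1) :: (v, b) :: l

variable {a b : ℕ} {l : List (ℕ × ℕ)}

theorem mem_consMerge {p : ℕ × ℕ} (hp : p ∈ consMerge a b l) : p = (a, b) ∨ p ∈ l := by
  rcases l with _ | ⟨⟨w, c⟩, l⟩
  · exact .inl (List.mem_singleton.1 hp)
  · simp only [consMerge] at hp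
    split_ifs at hp
    · exact (List.mem_cons.1 hp).imp_right (List.mem_cons_of_mem _)
    · exact List.mem_cons.1 hp

theorem IsStaircase.consMerge (hl : IsStaircase ((a + 1, b) :: l)) :
    IsStaircase (consMerge a b l) := by
  obtain ⟨hab, hlt, ht⟩ := isStaircase_cons.1 hl
  rcases l with _ | ⟨⟨w, c⟩, l⟩
  · exact isStaircase_cons.2 ⟨by omega, by simp, isStaircase_nil⟩
  · obtain ⟨-, hlt', ht'⟩ := isStaircase_cons.1 ht
    have hw := hlt (w, c) List.mem_cons_self
    simp only [_root_.consMerge]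
    split_ifs with hwa
    · refine isStaircase_cons.2 ⟨by omega, fun p hp => ?_, ht'⟩
      have := hlt' p hp
      exact ⟨by omega, by omega⟩
    · refine isStaircase_cons.2 ⟨by omega, fun p hp => ?_, ht⟩
      rcases List.mem_cons.1 hp with rfl | hp
      · exact ⟨by omega, hw.2⟩
      · have := hlt' p hp
        exact ⟨by omega, by omega⟩

theorem mem_insertGen {p : ℕ × ℕ} (hp : p ∈ insertGen a l) :
    p ∈ l ∨ p = (a, a + 1) ∨ p.1 = a ∧ (a + 1, p.2) ∈ l := by
  induction l with
  | nil => exact .inr (.inl (List.mem_singleton.1 hp))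
  | cons q l ih =>
    obtain ⟨v, b⟩ := q
    simp only [insertGen] at hp
    split_ifs at hp with h₁ h₂ h₃
    · rcases List.mem_cons.1 hp with rfl | hp
      · exact .inl List.mem_cons_self
      · rcases ih hp with h | h | ⟨h, h'⟩
        exacts [.inl (List.mem_cons_of_mem _ h), .inr (.inl h),
          .inr (.inr ⟨h, List.mem_cons_of_mem _ h'⟩)]
    · subst h₂
      rcases mem_consMerge hp with rfl | hp
      · exact .inr (.inr ⟨rfl, List.mem_cons_self⟩)
      · exact .inl (List.mem_cons_of_mem _ hp)
    · exact .inl hp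
    · rcases List.mem_cons.1 hp with rfl | hp
      · exact .inr (.inl rfl)
      · exact .inl hp

theorem IsStaircase.insertGen (hl : IsStaircase l) : IsStaircase (insertGen a l) := by
  induction l with
  | nil => exact isStaircase_cons.2 ⟨by omega, by simp, isStaircase_nil⟩
  | cons q l ih =>
    obtain ⟨v, b⟩ := q
    obtain ⟨hvb, hlt, ht⟩ := isStaircase_cons.1 hl
    simp only [_root_.insertGen]
    split_ifs with h₁ h₂ h₃
    · refine isStaircase_cons.2 ⟨hvb, fun p hp => ?_, ih ht⟩
      rcases mem_insertGen hp with hp | rfl | ⟨hpa, hp⟩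
      · exact hlt p hp
      · exact ⟨by omega, by omega⟩
      · exact ⟨by omega, (hlt _ hp).2⟩
    · subst h₂
      exact hl.consMerge
    · exact hl
    · refine isStaircase_cons.2 ⟨by omega, fun p hp => ?_, hl⟩
      rcases List.mem_cons.1 hp with rfl | hp
      · exact ⟨by omega, by omega⟩
      · have := hlt p hp
        exact ⟨by omega, by omega⟩

theorem snd_le_of_mem_insertGen {n : ℕ} (hl : ∀ p ∈ l, p.2 ≤ n) (ha : a < n) :
    ∀ p ∈ insertGen a l, p.2 ≤ n := by
  intro p hp
  rcases mem_insertGen hp with hp | rfl | ⟨-, hp⟩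
  · exact hl p hp
  · exact ha
  · exact hl (a + 1, p.2) hp

end Staircase

section StaircaseProd

variable {M : Type*} [Monoid M]

def staircaseProd (x : ℕ → M) (l : List (ℕ × ℕ)) : M :=
  (l.map fun p => segmentProd x p.1 p.2).prod

variable {x : ℕ → M}

theorem staircaseProd_cons (v b : ℕ) (l : List (ℕ × ℕ)) :
    staircaseProd x ((v, b) :: l) = segmentProd x v b * staircaseProd x l :=
  List.prod_cons

theorem IsLinearHKFamily.segmentProd_mul_staircaseProd (hx : IsLinearHKFamily x) {a b : ℕ}
    {l : List (ℕ × ℕ)} (hl : IsStaircase ((a + 1, b) :: l)) :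
    segmentProd x a b * staircaseProd x l = staircaseProd x (consMerge a b l) := by
  rcases l with _ | ⟨⟨w, c⟩, l⟩
  · rfl
  · simp only [consMerge]
    split_ifs with hwa
    · subst hwa
      rw [staircaseProd_cons, staircaseProd_cons, ← mul_assoc,
        hx.segmentProd_mul_segmentProd le_rfl ((isStaircase_cons.1 hl).2.1 _ List.mem_cons_self).2.le]
    · rfl

theorem IsLinearHKFamily.mul_staircaseProd (hx : IsLinearHKFamily x) (a : ℕ)
    {l : List (ℕ × ℕ)} (hl : IsStaircase l) :
    x a * staircaseProd x l = staircaseProd x (insertGen a l) := by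
  induction l with
  | nil => rw [insertGen, staircaseProd_cons, segmentProd_self_succ]
  | cons q l ih =>
    obtain ⟨v, b⟩ := q
    obtain ⟨hvb, hlt, ht⟩ := isStaircase_cons.1 hl
    simp only [insertGen]
    split_ifs with h₁ h₂ h₃
    · rw [staircaseProd_cons, staircaseProd_cons, ← mul_assoc,
        (hx.commute_segmentProd h₁).eq, mul_assoc, ih ht]
    · subst h₂
      rw [staircaseProd_cons, ← mul_assoc, ← segmentProd_eq_mul (by omega : a < b),
        hx.segmentProd_mul_staircaseProd hl]
    · rw [staircaseProd_cons, ← mul_assoc, hx.mul_segmentProd_of_mem (by omega) h₃]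
    · rw [staircaseProd_cons a (a + 1), segmentProd_self_succ]

end StaircaseProd

section Collapse

theorem Function.End.mul_apply {α : Type*} (f g : Function.End α) (a : α) :
    (f * g) a = f (g a) :=
  rfl

def collapse (v b : ℕ) : Function.End ℕ := fun y => if v < y ∧ y ≤ b then v else y

theorem collapse_apply (v b y : ℕ) : collapse v b y = if v < y ∧ y ≤ b then v else y := rfl

theorem collapse_of_le {v b : ℕ} (h : b ≤ v) : collapse v b = 1 :=
  funext fun _ => if_neg (by omega)

theorem collapse_mul_collapse_succ {v b : ℕ} (h : v ≤ b) :
    collapse v b * collapse b (b + 1) = collapse v (b + 1) :=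
  funext fun y => by
    simp only [Function.End.mul_apply, collapse_apply]
    split_ifs <;> omega

theorem isLinearHKFamily_collapse : IsLinearHKFamily fun a => collapse a (a + 1) where
  idem a := funext fun y => by
    simp only [Function.End.mul_apply, collapse_apply]
    split_ifs <;> omega
  braid s t := funext fun y => by
    simp only [Function.End.mul_apply, collapse_apply]
    split_ifs <;> omega
  absorb s t h := funext fun y => by
    simp only [Function.End.mul_apply, collapse_apply]
    split_ifs <;> omega

theorem map_segmentProd {M : Type*} [Monoid M] (ψ : M →* Function.End ℕ) {x : ℕ → M} {b : ℕ}
    (h : ∀ a < b, ψ (x a) = collapse a (a + 1)) (v : ℕ) :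
    ψ (segmentProd x v b) = collapse v b := by
  induction b with
  | zero => rw [segmentProd_of_le (Nat.zero_le v), map_one, collapse_of_le (Nat.zero_le v)]
  | succ b ih =>
    by_cases hvb : v ≤ b
    · rw [segmentProd_succ hvb, map_mul, ih fun a ha => h a (by omega), h b (by omega),
        collapse_mul_collapse_succ hvb]
    · rw [segmentProd_of_le (by omega), map_one, collapse_of_le (by omega)]

def collapseProd (l : List (ℕ × ℕ)) : Function.End ℕ :=
  (l.map fun p => collapse p.1 p.2).prod

theorem collapseProd_cons (v b : ℕ) (l : List (ℕ × ℕ)) :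
    collapseProd ((v, b) :: l) = collapse v b * collapseProd l :=
  List.prod_cons

theorem map_staircaseProd {M : Type*} [Monoid M] (ψ : M →* Function.End ℕ) {x : ℕ → M} {n : ℕ}
    (h : ∀ a < n, ψ (x a) = collapse a (a + 1)) {l : List (ℕ × ℕ)} (hl : ∀ p ∈ l, p.2 ≤ n) :
    ψ (staircaseProd x l) = collapseProd l := by
  rw [staircaseProd, map_list_prod, List.map_map, collapseProd]
  congr 1
  refine List.map_congr_left fun p hp => map_segmentProd ψ (fun a ha => h a ?_) p.1
  have := hl p hp
  omega

theorem collapseProd_apply_of_lt {l : List (ℕ × ℕ)} {y : ℕ} (h : ∀ p ∈ l, p.2 < y) :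
    collapseProd l y = y := by
  induction l with
  | nil => rfl
  | cons p l ih =>
    have hp := h p List.mem_cons_self
    rw [collapseProd_cons, Function.End.mul_apply, ih fun q hq => h q (List.mem_cons_of_mem _ hq),
      collapse_apply, if_neg (by omega)]

theorem collapseProd_apply_eq_or_lt {l : List (ℕ × ℕ)} {v : ℕ} (h : ∀ p ∈ l, p.1 < v) (y : ℕ) :
    collapseProd l y = y ∨ collapseProd l y < v := by
  induction l with
  | nil => exact .inl rfl
  | cons p l ih =>
    have hp := h p List.mem_cons_self
    rw [collapseProd_cons, Function.End.mul_apply, collapse_apply]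
    rcases ih fun q hq => h q (List.mem_cons_of_mem _ hq) with h' | h' <;> split_ifs <;> omega

namespace IsStaircase

variable {v b : ℕ} {l : List (ℕ × ℕ)} (hl : IsStaircase ((v, b) :: l))
include hl

theorem collapseProd_apply_top : collapseProd ((v, b) :: l) b = v := by
  obtain ⟨hvb, hlt, -⟩ := isStaircase_cons.1 hl
  rw [collapseProd_cons, Function.End.mul_apply, collapseProd_apply_of_lt fun p hp => (hlt p hp).2,
    collapse_apply, if_pos ⟨hvb, le_rfl⟩]

theorem le_top_of_collapseProd_apply_ne {y : ℕ} (hy : collapseProd ((v, b) :: l) y ≠ y) :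
    y ≤ b := by
  obtain ⟨-, hlt, -⟩ := isStaircase_cons.1 hl
  by_contra! hby
  refine hy (collapseProd_apply_of_lt fun p hp => ?_)
  rcases List.mem_cons.1 hp with rfl | hp
  · exact hby
  · exact (hlt p hp).2.trans hby

theorem collapseProd_tail_apply (y : ℕ) :
    collapseProd l y = if v < y ∧ y ≤ b ∧ collapseProd ((v, b) :: l) y = v then y
      else collapseProd ((v, b) :: l) y := by
  obtain ⟨-, hlt, -⟩ := isStaircase_cons.1 hl
  rw [collapseProd_cons, Function.End.mul_apply, collapse_apply]
  rcases collapseProd_apply_eq_or_lt (fun p hp => (hlt p hp).1) y with h | h <;>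
    split_ifs <;> omega

end IsStaircase

theorem IsStaircase.eq_of_collapseProd_eq {l l' : List (ℕ × ℕ)} (hl : IsStaircase l)
    (hl' : IsStaircase l') (h : collapseProd l = collapseProd l') : l = l' := by
  induction l generalizing l' with
  | nil =>
    rcases l' with _ | ⟨⟨v', b'⟩, l'⟩
    · rfl
    · have := congrFun h b'
      rw [hl'.collapseProd_apply_top] at this
      exact absurd this (isStaircase_cons.1 hl').1.ne'
  | cons p l ih =>
    obtain ⟨v, b⟩ := p
    have hvb := (isStaircase_cons.1 hl).1
    rcases l' with _ | ⟨⟨v', b'⟩, l'⟩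
    · have := congrFun h b
      rw [hl.collapseProd_apply_top] at this
      exact absurd this hvb.ne
    · have hvb' := (isStaircase_cons.1 hl').1
      obtain rfl : b = b' := le_antisymm
        (hl'.le_top_of_collapseProd_apply_ne (by rw [← h, hl.collapseProd_apply_top]; omega))
        (hl.le_top_of_collapseProd_apply_ne (by rw [h, hl'.collapseProd_apply_top]; omega))
      obtain rfl : v = v' := by
        rw [← hl.collapseProd_apply_top, ← hl'.collapseProd_apply_top, h]
      have ht : collapseProd l = collapseProd l' := funext fun y => by
        rw [hl.collapseProd_tail_apply, hl'.collapseProd_tail_apply, h]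
      rw [ih (isStaircase_cons.1 hl).2.2 (isStaircase_cons.1 hl').2.2 ht]

def stairs (g : ℕ → ℕ) : ℕ → List (ℕ × ℕ)
  | 0 => []
  | k + 1 => (g k, k) :: stairs g k

theorem snd_lt_of_mem_stairs {g : ℕ → ℕ} {k : ℕ} {p : ℕ × ℕ} (hp : p ∈ stairs g k) : p.2 < k := by
  induction k with
  | zero => simp [stairs] at hp
  | succ k ih =>
    rcases List.mem_cons.1 hp with rfl | hp
    · exact Nat.lt_succ_self k
    · exact (ih hp).trans (Nat.lt_succ_self k)

theorem collapseProd_stairs {g : ℕ → ℕ} (hg : Monotone g) (hle : ∀ y, g y ≤ y) (k y : ℕ) :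
    collapseProd (stairs g k) y = if y < k then g y else y := by
  induction k with
  | zero => exact if_neg (Nat.not_lt_zero y) |>.symm
  | succ k ih =>
    rw [stairs, collapseProd_cons, Function.End.mul_apply, ih, collapse_apply]
    have := hle k
    rcases lt_trichotomy y k with hyk | rfl | hyk
    · have := hg hyk.le
      simp only [hyk, if_true]
      split_ifs <;> omega
    · simp only [lt_irrefl, if_false]
      split_ifs <;> omega
    · simp only [hyk.not_gt, if_false]
      split_ifs <;> omega

end Collapse

namespace NDPF

def toEnd (n : ℕ) : NDPF (n + 1) →* Function.End ℕ where
  toFun f y := if h : y < n + 1 then f.1 ⟨y, h⟩ else y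
  map_one' := funext fun y => by split_ifs <;> rfl
  map_mul' f g := funext fun y => by
    erw [Function.End.mul_apply]
    by_cases hy : y < n + 1
    · simp only [dif_pos hy, dif_pos (g.1 ⟨y, hy⟩).2]
      rfl
    · simp only [dif_neg hy]

variable {n : ℕ}

theorem toEnd_apply_of_lt (f : NDPF (n + 1)) {y : ℕ} (h : y < n + 1) :
    toEnd n f y = f.1 ⟨y, h⟩ :=
  dif_pos h

theorem toEnd_apply_of_le (f : NDPF (n + 1)) {y : ℕ} (h : n + 1 ≤ y) : toEnd n f y = y :=
  dif_neg (by omega)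

theorem toEnd_injective : Function.Injective (toEnd n) := fun f g h =>
  Subtype.ext <| funext fun i => Fin.ext <| by
    simpa only [toEnd_apply_of_lt _ i.2] using congrFun h i

theorem monotone_toEnd (f : NDPF (n + 1)) : Monotone (toEnd n f) := by
  intro y z hyz
  by_cases hz : z < n + 1
  · rw [toEnd_apply_of_lt f hz, toEnd_apply_of_lt f (by omega)]
    exact f.2.1 (Fin.mk_le_mk.2 hyz)
  · rw [toEnd_apply_of_le f (y := z) (by omega)]
    by_cases hy : y < n + 1
    · rw [toEnd_apply_of_lt f hy]
      exact Nat.le_trans (f.2.2 ⟨y, hy⟩) hyz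
    · rwa [toEnd_apply_of_le f (by omega)]

theorem toEnd_apply_le (f : NDPF (n + 1)) (y : ℕ) : toEnd n f y ≤ y := by
  by_cases hy : y < n + 1
  · rw [toEnd_apply_of_lt f hy]
    exact f.2.2 _
  · rw [toEnd_apply_of_le f (by omega)]

theorem toEnd_ndpfPi (j : Fin n) : toEnd n (ndpfPi j) = collapse j (j + 1) := funext fun y => by
  rw [collapse_apply]
  by_cases hy : y < n + 1
  · rw [toEnd_apply_of_lt _ hy]
    simp only [ndpfPi, apply_ite Fin.val]
    split_ifs <;> omega
  · rw [toEnd_apply_of_le _ (by omega), if_neg (by omega)]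

end NDPF

namespace HK

variable {V : Type} {arr : V → V → Prop}

theorem mk'_eq_of_hkRel {u w : FreeMonoid V} (h : HKRel arr u w) :
    (HKCon arr).mk' u = (HKCon arr).mk' w :=
  (Con.eq _).2 (ConGen.Rel.of _ _ h)

theorem x_mul_self (t : V) : x arr t * x arr t = x arr t := by
  simpa only [x, map_mul] using mk'_eq_of_hkRel (HKRel.idem (arr := arr) t)

theorem x_braid (s t : V) : x arr s * x arr t * x arr s = x arr t * x arr s * x arr t := by
  simpa only [x, map_mul] using mk'_eq_of_hkRel (HKRel.braid (arr := arr) s t)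

theorem x_absorb {s t : V} (h : ¬arr t s) : x arr t * x arr s * x arr t = x arr s * x arr t := by
  simpa only [x, map_mul] using mk'_eq_of_hkRel (HKRel.absorb s t h)

end HK

/-- Padding with `1` beyond `n` keeps the relations, see `isLinearHKFamily_hkGen`. -/
def hkGen (n a : ℕ) : HK (arrQn n) :=
  if h : a < n then HK.x (arrQn n) ⟨a, h⟩ else 1

theorem hkGen_of_lt {n a : ℕ} (h : a < n) : hkGen n a = HK.x (arrQn n) ⟨a, h⟩ :=
  dif_pos h

theorem isLinearHKFamily_hkGen (n : ℕ) : IsLinearHKFamily (hkGen n) where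
  idem a := by
    unfold hkGen
    split_ifs
    exacts [HK.x_mul_self _, mul_one 1]
  braid s t := by
    unfold hkGen
    split_ifs <;> simp only [mul_one, one_mul, HK.x_braid, HK.x_mul_self]
  absorb s t h := by
    unfold hkGen
    split_ifs with hs ht ht
    · exact HK.x_absorb fun h' => h h'.symm
    all_goals simp only [mul_one, one_mul, HK.x_mul_self]

theorem exists_staircaseProd_eq {n : ℕ} (p : HK (arrQn n)) :
    ∃ l, IsStaircase l ∧ (∀ q ∈ l, q.2 ≤ n) ∧ staircaseProd (hkGen n) l = p := by
  induction p using Con.induction_on with | _ w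
  induction w using FreeMonoid.inductionOn' with
  | one => exact ⟨[], isStaircase_nil, by simp, rfl⟩
  | of_mul j w ih =>
    obtain ⟨l, hl, hln, hw⟩ := ih
    refine ⟨insertGen j l, hl.insertGen, snd_le_of_mem_insertGen hln j.2, ?_⟩
    rw [← (isLinearHKFamily_hkGen n).mul_staircaseProd j hl, hw, hkGen_of_lt j.2]
    rfl

theorem hkCon_le_ker (n : ℕ) : HKCon (arrQn n) ≤ Con.ker (FreeMonoid.lift (ndpfPi (n := n))) :=
  Con.conGen_le.2 fun u w h => by
    rw [Con.ker_rel]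
    apply NDPF.toEnd_injective
    have hc := isLinearHKFamily_collapse
    cases h with
    | idem t => simpa only [map_mul, FreeMonoid.lift_eval_of, NDPF.toEnd_ndpfPi] using hc.idem t
    | braid s t =>
      simpa only [map_mul, FreeMonoid.lift_eval_of, NDPF.toEnd_ndpfPi] using hc.braid s t
    | absorb s t h =>
      simpa only [map_mul, FreeMonoid.lift_eval_of, NDPF.toEnd_ndpfPi] using
        hc.absorb s t fun h' => h h'.symm

def hkToNDPF (n : ℕ) : HK (arrQn n) →* NDPF (n + 1) :=
  (HKCon (arrQn n)).lift (FreeMonoid.lift ndpfPi) (hkCon_le_ker n)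

theorem hkToNDPF_x {n : ℕ} (j : Fin n) : hkToNDPF n (HK.x (arrQn n) j) = ndpfPi j :=
  (Con.lift_mk' _ _).trans (FreeMonoid.lift_eval_of _ _)

theorem toEnd_hkToNDPF_staircaseProd {n : ℕ} {l : List (ℕ × ℕ)} (hl : ∀ p ∈ l, p.2 ≤ n) :
    NDPF.toEnd n (hkToNDPF n (staircaseProd (hkGen n) l)) = collapseProd l :=
  map_staircaseProd ((NDPF.toEnd n).comp (hkToNDPF n))
    (fun a ha => by rw [MonoidHom.comp_apply, hkGen_of_lt ha, hkToNDPF_x, NDPF.toEnd_ndpfPi]) hl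

theorem hkToNDPF_injective (n : ℕ) : Function.Injective (hkToNDPF n) := by
  intro p q h
  obtain ⟨l, hl, hln, rfl⟩ := exists_staircaseProd_eq p
  obtain ⟨l', hl', hln', rfl⟩ := exists_staircaseProd_eq q
  have h' := congrArg (NDPF.toEnd n) h
  rw [toEnd_hkToNDPF_staircaseProd hln, toEnd_hkToNDPF_staircaseProd hln'] at h'
  rw [hl.eq_of_collapseProd_eq hl' h']

theorem hkToNDPF_surjective (n : ℕ) : Function.Surjective (hkToNDPF n) := by
  intro f
  set g : ℕ → ℕ := NDPF.toEnd n f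
  refine ⟨staircaseProd (hkGen n) (stairs g (n + 1)), NDPF.toEnd_injective ?_⟩
  rw [toEnd_hkToNDPF_staircaseProd fun p hp => Nat.le_of_lt_add_one (snd_lt_of_mem_stairs hp)]
  funext y
  rw [collapseProd_stairs (NDPF.monotone_toEnd f) (NDPF.toEnd_apply_le f), ite_eq_left_iff]
  exact fun hy => (NDPF.toEnd_apply_of_le f (not_lt.1 hy)).symm

theorem hk_iso_ndpf_general (n : ℕ) :
    ∃ φ : HK (arrQn n) ≃* NDPF (n + 1),
      ∀ j : Fin n, φ (HK.x (arrQn n) j) = ndpfPi j :=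
  ⟨MulEquiv.ofBijective (hkToNDPF n) ⟨hkToNDPF_injective n, hkToNDPF_surjective n⟩, hkToNDPF_x⟩

/-- For every `n ≥ 1`, the assignment `x_j ↦ π_j` extends to a monoid
isomorphism from the Hecke–Kiselman monoid of the linearly oriented type-`A` quiver
`Q_n` onto the monoid `NDPF_{n+1}` of non-decreasing parking functions. -/
theorem hk_iso_ndpf (n : ℕ) (hn : 1 ≤ n) :
    ∃ φ : HK (arrQn n) ≃* NDPF (n + 1),
      ∀ j : Fin n, φ (HK.x (arrQn n) j) = ndpfPi j :=
  hk_iso_ndpf_general n
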